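/- arXiv:2112.13912 — 2 statements merged into one kernel-verified Lean document; each statement's English description precedes it below -/
import Mathlib

section
/- Let n ≥ 2 and let k be any natural number. Then n divides the number of order-n Latin squares whose inner distance equals k. -/
/-- Distance between two symbols of `ZMod n`: the minimum of the two cyclic differences. -/
def zdist {n : ℕ} (a b : ZMod n) : ℕ := min (a - b).val (b - a).val

/-- An order-`n` Latin square: every row and every column is injective. -/
def IsLatin (n : ℕ) (L : Fin n → Fin n → ZMod n) : Prop :=
  (∀ i, Function.Injective (L i)) ∧ ∀ j, Function.Injective fun i => L i j

/-- The inner distance of a square: the minimum of `zdist` over all pairs of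
horizontally or vertically adjacent cells. -/
noncomputable def innerDist (n : ℕ) (L : Fin n → Fin n → ZMod n) : ℕ :=
  sInf { d : ℕ |
    (∃ i : Fin n, ∃ j : ℕ, ∃ hj : j + 1 < n,
      d = zdist (L i ⟨j, Nat.lt_of_succ_lt hj⟩) (L i ⟨j + 1, hj⟩)) ∨
    (∃ j : Fin n, ∃ i : ℕ, ∃ hi : i + 1 < n,
      d = zdist (L ⟨i, Nat.lt_of_succ_lt hi⟩ j) (L ⟨i + 1, hi⟩ j)) }

/-!
Adding a constant `c : ZMod n` to every entry preserves being Latin and the inner distance, so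
`ZMod n` acts on the squares of a given inner distance. The action is free, and normalizing the
corner entry to `0` picks one square from each orbit, so every orbit has exactly `n` elements.
-/

section EquivariantCoordinate

variable {G F : Type*} [AddGroup G] [AddAction G F]

def AddAction.prodFiberEquivOfEquivariant (φ : F → G) (hφ : ∀ (c : G) f, φ (c +ᵥ f) = c + φ f)
    (S : Set F) (hS : ∀ (c : G), ∀ f ∈ S, c +ᵥ f ∈ S) :
    G × {f | f ∈ S ∧ φ f = 0} ≃ S where
  toFun p := ⟨p.1 +ᵥ p.2.1, hS _ _ p.2.2.1⟩
  invFun f := (φ f, ⟨-φ f +ᵥ f.1, hS _ _ f.2, by rw [hφ, neg_add_cancel]⟩)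
  left_inv := by
    rintro ⟨c, f, -, hf⟩
    have hc : φ (c +ᵥ f) = c := by rw [hφ, hf, add_zero]
    ext <;> simp [hc]
  right_inv f := Subtype.ext (vadd_neg_vadd _ _)

theorem AddAction.card_dvd_card_of_equivariant (φ : F → G)
    (hφ : ∀ (c : G) f, φ (c +ᵥ f) = c + φ f) (S : Set F) (hS : ∀ (c : G), ∀ f ∈ S, c +ᵥ f ∈ S) :
    Nat.card G ∣ Nat.card S := by
  rw [← Nat.card_congr (prodFiberEquivOfEquivariant φ hφ S hS), Nat.card_prod]
  exact dvd_mul_right _ _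

end EquivariantCoordinate

section ConstantShift

variable {n : ℕ}

theorem zdist_add_left (c a b : ZMod n) : zdist (c + a) (c + b) = zdist a b := by
  simp only [zdist, add_sub_add_left_eq_sub]

theorem IsLatin.vadd {L : Fin n → Fin n → ZMod n} (h : IsLatin n L) (c : ZMod n) :
    IsLatin n (c +ᵥ L) :=
  ⟨fun i _ _ hxy => h.1 i (add_left_cancel hxy), fun j _ _ hxy => h.2 j (add_left_cancel hxy)⟩

theorem innerDist_vadd (L : Fin n → Fin n → ZMod n) (c : ZMod n) :
    innerDist n (c +ᵥ L) = innerDist n L := by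
  simp only [innerDist, Pi.vadd_apply, vadd_eq_add, zdist_add_left]

end ConstantShift

theorem stmt5 (n : ℕ) (hn : 2 ≤ n) (k : ℕ) :
    n ∣ {L : Fin n → Fin n → ZMod n | IsLatin n L ∧ innerDist n L = k}.ncard := by
  have corner : Fin n := ⟨0, by omega⟩
  have hdvd := AddAction.card_dvd_card_of_equivariant (fun L : Fin n → Fin n → ZMod n =>
      L corner corner) (fun _ _ => rfl)
    {L | IsLatin n L ∧ innerDist n L = k}
    (fun c L hL => ⟨hL.1.vadd c, (innerDist_vadd L c).trans hL.2⟩)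
  rwa [Nat.card_zmod, Nat.card_coe_set_eq] at hdvd
end

section
/- Let n ≥ 3, let r : Fin n → ZMod n be injective, and define L : Fin n → Fin n → ZMod n by L(i, j) = r(j − i), indices taken mod n (so L is circulant with first row r). Then L is an order-n Latin square, and the inner distance of L equals the minimum of the inner distance of the row r and dist(r(0), r(n−1)). -/
/-- The inner distance of a Latin row: the minimum distance between consecutive entries. -/
noncomputable def rowInnerDist (n : ℕ) (r : Fin n → ZMod n) : ℕ :=
  sInf { d : ℕ | ∃ j : ℕ, ∃ hj : j + 1 < n,
    d = zdist (r ⟨j + 1, hj⟩) (r ⟨j, Nat.lt_of_succ_lt hj⟩) }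

theorem zdist_comm' {n : ℕ} (a b : ZMod n) : zdist a b = zdist b a := min_comm _ _

theorem fin_add_one' {n : ℕ} [NeZero n] (hn : 3 ≤ n) (j : ℕ) (hj : j + 1 < n) :
    (⟨j, Nat.lt_of_succ_lt hj⟩ : Fin n) + 1 = ⟨j + 1, hj⟩ := by
  ext
  simp only [Fin.add_def, Fin.val_one', Nat.mod_eq_of_lt (show 1 < n by omega),
    Nat.mod_eq_of_lt hj]

theorem fin_last_add_one' {n : ℕ} [NeZero n] (hn : 3 ≤ n) :
    (⟨n - 1, Nat.sub_lt (by omega) Nat.one_pos⟩ : Fin n) + 1 = 0 := by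
  ext
  simp only [Fin.add_def, Fin.val_one', Nat.mod_eq_of_lt (show 1 < n by omega), Fin.val_zero]
  rw [show n - 1 + 1 = n by omega, Nat.mod_self]

theorem stmt19 (n : ℕ) [NeZero n] (hn : 3 ≤ n)
    (r : Fin n → ZMod n) (hr : Function.Injective r)
    (L : Fin n → Fin n → ZMod n) (hL : ∀ i j : Fin n, L i j = r (j - i)) :
    IsLatin n L ∧
      innerDist n L = min (rowInnerDist n r) (zdist (r 0) (r ⟨n - 1, by omega⟩)) := by
  have h1 : (1 : ℕ) + 1 < n := by omega
  have h01 : (0 : ℕ) + 1 < n := by omega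
  constructor
  · refine ⟨fun i a b h => ?_, fun j a b h => ?_⟩
    · rw [hL, hL] at h
      exact sub_left_injective (hr h)
    · have h' : L a j = L b j := h
      rw [hL, hL] at h'
      exact sub_right_injective (hr h')
  · set c : ℕ := zdist (r 0) (r ⟨n - 1, by omega⟩) with hc
    set R : Set ℕ := { d : ℕ | ∃ j : ℕ, ∃ hj : j + 1 < n,
      d = zdist (r ⟨j + 1, hj⟩) (r ⟨j, Nat.lt_of_succ_lt hj⟩) } with hR
    -- every cyclic-consecutive pair lies in the square's adjacency set
    have mem2 : ∀ k : Fin n, zdist (r k) (r (k + 1)) ∈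
        { d : ℕ |
          (∃ i : Fin n, ∃ j : ℕ, ∃ hj : j + 1 < n,
            d = zdist (L i ⟨j, Nat.lt_of_succ_lt hj⟩) (L i ⟨j + 1, hj⟩)) ∨
          (∃ j : Fin n, ∃ i : ℕ, ∃ hi : i + 1 < n,
            d = zdist (L ⟨i, Nat.lt_of_succ_lt hi⟩ j) (L ⟨i + 1, hi⟩ j)) } := by
      intro k
      refine Or.inl ⟨-k, 0, h01, ?_⟩
      rw [hL, hL]
      have e0 : (⟨0, Nat.lt_of_succ_lt h01⟩ : Fin n) - (-k) = k := by
        have : (⟨0, Nat.lt_of_succ_lt h01⟩ : Fin n) = 0 := rfl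
        rw [this, zero_sub, neg_neg]
      have e1 : (⟨0 + 1, h01⟩ : Fin n) - (-k) = k + 1 := by
        have : (⟨0 + 1, h01⟩ : Fin n) = 1 := by
          ext; simp [Fin.val_one', Nat.mod_eq_of_lt (show 1 < n by omega)]
        rw [this, sub_neg_eq_add, add_comm]
      rw [e0, e1]
    -- every cyclic-consecutive pair lies in R ∪ {c}
    have mem1 : ∀ k : Fin n, zdist (r k) (r (k + 1)) ∈ R ∪ {c} := by
      intro k
      by_cases hk : (k : ℕ) + 1 < n
      · left
        refine ⟨(k : ℕ), hk, ?_⟩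
        rw [zdist_comm']
        congr 1
        rw [← fin_add_one' hn _ hk]
      · right
        have hk' : k = ⟨n - 1, by omega⟩ := by
          ext; have := k.isLt; simp; omega
        have h0 : k + 1 = 0 := by rw [hk']; exact fin_last_add_one' hn
        rw [h0, hk']
        exact Set.mem_singleton_iff.2 (zdist_comm' _ _)
    have hset : { d : ℕ |
          (∃ i : Fin n, ∃ j : ℕ, ∃ hj : j + 1 < n,
            d = zdist (L i ⟨j, Nat.lt_of_succ_lt hj⟩) (L i ⟨j + 1, hj⟩)) ∨
          (∃ j : Fin n, ∃ i : ℕ, ∃ hi : i + 1 < n,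
            d = zdist (L ⟨i, Nat.lt_of_succ_lt hi⟩ j) (L ⟨i + 1, hi⟩ j)) } = R ∪ {c} := by
      ext d
      constructor
      · rintro (⟨i, j, hj, hd⟩ | ⟨j, i, hi, hd⟩)
        · rw [hL, hL] at hd
          have e : (⟨j + 1, hj⟩ : Fin n) - i = (⟨j, Nat.lt_of_succ_lt hj⟩ : Fin n) - i + 1 := by
            rw [← fin_add_one' hn j hj, add_sub_right_comm]
          rw [e] at hd
          rw [hd]; exact mem1 _
        · rw [hL, hL] at hd
          have e : j - (⟨i, Nat.lt_of_succ_lt hi⟩ : Fin n)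
              = j - (⟨i + 1, hi⟩ : Fin n) + 1 := by
            rw [← fin_add_one' hn i hi]
            abel
          rw [e, zdist_comm'] at hd
          rw [hd]; exact mem1 _
      · rintro (⟨j, hj, hd⟩ | hd)
        · have e : (⟨j + 1, hj⟩ : Fin n) = (⟨j, Nat.lt_of_succ_lt hj⟩ : Fin n) + 1 :=
            (fin_add_one' hn j hj).symm
          rw [e, zdist_comm'] at hd
          rw [hd]; exact mem2 _
        · simp only [Set.mem_singleton_iff] at hd
          have e : (0 : Fin n) = (⟨n - 1, by omega⟩ : Fin n) + 1 := (fin_last_add_one' hn).symm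
          rw [hd, hc, e, zdist_comm']
          exact mem2 _
    have hRne : R.Nonempty := ⟨_, 0, h01, rfl⟩
    rw [innerDist, hset, csInf_union (OrderBot.bddBelow R) hRne (OrderBot.bddBelow _)
      (Set.singleton_nonempty c), csInf_singleton]
    rfl
end
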